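/- Let F1, F2 ∈ S be arbitrary polynomials, n1, n2 ∈ ℂ[v] ⊂ S and l1, l2 ∈ ℂ. Set E1 = F1·∂_y + ((1/2)·v²·t + n1·t²)∂_v + l1·t²·∂_t and E2 = F2·∂_y + ((1/2)·t + n2·t²)∂_v + l2·t²·∂_t. Then ([E1,E2])(v) is congruent to −(1/2)·v·t² + (l1/2)·t² − (l2/2)·v²·t² modulo the ideal of S generated by t³ (and this polynomial is a nonzero element of S/(t³) for every choice of l1, l2). -/

import Mathlib

open MvPolynomial

noncomputable section

/-- `S = ℂ[v,y,t]` with `v = X 0`, `y = X 1`, `t = X 2`. -/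
abbrev S : Type := MvPolynomial (Fin 3) ℂ

/-- The variable `v`. -/ def V : S := X 0
/-- The variable `y`. -/ def Y : S := X 1
/-- The variable `t`. -/ def T : S := X 2

/-- The derivation `f ∂_y + g ∂_v + h ∂_t` of `S = ℂ[v,y,t]`, determined by
`y ↦ f`, `v ↦ g`, `t ↦ h`. -/
def der (f g h : S) : Derivation ℂ S S :=
  MvPolynomial.mkDerivation ℂ ![g, f, h]

/-- The inclusion `ℂ[v,y] ⊂ S` (where in `ℂ[v,y]` the variable `X 0` is `v`
and `X 1` is `y`). -/
def ι2 : MvPolynomial (Fin 2) ℂ →ₐ[ℂ] S := aeval ![V, Y]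

/-- The inclusion `ℂ[v] ⊂ S`. -/
def ι1 : Polynomial ℂ →ₐ[ℂ] S := Polynomial.aeval V

/-! Modulo `t³` the bracket is read off from `E₁ t, E₂ t ∈ (t²)` and `E₁ v, E₂ v ∈ (t)`: by the
chain rule `Eᵢ (n(v)) = n'(v) · Eᵢ v ∈ (t)`, so every term involving `n₁, n₂` carries `t³`, and
what survives is `E₁ (t/2) - E₂ (v² t/2) ≡ l₁ t²/2 - v t²/2 - l₂ v² t²/2`. This is `q(v) t²` for
a nonzero `q ∈ ℂ[v]`, and `t ∣ q(v)` is impossible, as one sees by sending `t ↦ 0`. -/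

@[simp]
theorem der_apply_V (f g h : S) : der f g h V = g := by
  simp [der, V, mkDerivation_X]

@[simp]
theorem der_apply_T (f g h : S) : der f g h T = h := by
  simp [der, T, mkDerivation_X]

@[simp]
theorem der_apply_ι1 (f g h : S) (p : Polynomial ℂ) :
    der f g h (ι1 p) = ι1 (Polynomial.derivative p) * g := by
  simp [ι1]

theorem ι1_eq_zero_of_T_dvd {p : Polynomial ℂ} (h : T ∣ ι1 p) : p = 0 := by
  let φ : S →ₐ[ℂ] Polynomial ℂ := aeval ![Polynomial.X, 0, 0]
  have hφ : φ (ι1 p) = p := by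
    simp [φ, ι1, ← Polynomial.aeval_algHom_apply, V]
  simpa [hφ, φ, T] using map_dvd φ h

theorem mem_span_pow_succ_mul_pow_iff {R : Type*} [CommRing R] [IsDomain R] {t : R} (ht : t ≠ 0)
    (a : R) (n : ℕ) : a * t ^ n ∈ Ideal.span {t ^ (n + 1)} ↔ a ∈ Ideal.span {t} := by
  simp only [Ideal.mem_span_singleton, pow_succ, mul_comm a]
  exact mul_dvd_mul_iff_left (pow_ne_zero n ht)

theorem C_half_mul_two : (C (1 / 2 : ℂ) : S) * 2 = 1 := by
  rw [← map_ofNat C 2, ← C_mul]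
  norm_num

theorem C_div_two (x : ℂ) : (C (x / 2) : S) = C (1 / 2) * C x := by
  rw [← C_mul, one_div_mul_eq_div]

theorem bracket_der_apply_V_sub_mem (F1 F2 : S) (n1 n2 : Polynomial ℂ) (l1 l2 : ℂ) :
    ⁅der F1 (C (1 / 2 : ℂ) * V ^ 2 * T + ι1 n1 * T ^ 2) (C l1 * T ^ 2),
        der F2 (C (1 / 2 : ℂ) * T + ι1 n2 * T ^ 2) (C l2 * T ^ 2)⁆ V -
        (-(C (1 / 2 : ℂ)) * V * T ^ 2 + C (l1 / 2) * T ^ 2 - C (l2 / 2) * V ^ 2 * T ^ 2) ∈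
      Ideal.span {T ^ 3} := by
  simp only [Derivation.commutator_apply, der_apply_V, map_add, Derivation.leibniz,
    Derivation.leibniz_pow, der_apply_T, der_apply_ι1, derivation_C, smul_eq_mul, nsmul_eq_mul]
  rw [Ideal.mem_span_singleton']
  refine ⟨ι1 (Polynomial.derivative n2) * (C (1 / 2) * V ^ 2 + ι1 n1 * T) + 2 * C l1 * ι1 n2
    - 2 * C (1 / 2) * V * ι1 n2 - ι1 (Polynomial.derivative n1) * (C (1 / 2) + ι1 n2 * T)
    - 2 * C l2 * ι1 n1, ?_⟩
  linear_combination (C (1 / 2) * V * T ^ 2) * C_half_mul_two + T ^ 2 * C_div_two l1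
    - V ^ 2 * T ^ 2 * C_div_two l2

theorem leading_term_not_mem_span_T_pow_three (l1 l2 : ℂ) :
    -(C (1 / 2 : ℂ)) * V * T ^ 2 + C (l1 / 2) * T ^ 2 - C (l2 / 2) * V ^ 2 * T ^ 2 ∉
      Ideal.span {T ^ 3} := by
  let q : Polynomial ℂ := Polynomial.C (l1 / 2) - Polynomial.C (1 / 2) * Polynomial.X
    - Polynomial.C (l2 / 2) * Polynomial.X ^ 2
  have hq : q ≠ 0 := fun h => by
    simpa [q] using congrArg (Polynomial.coeff · 1) h
  have expand : -(C (1 / 2 : ℂ)) * V * T ^ 2 + C (l1 / 2) * T ^ 2 - C (l2 / 2) * V ^ 2 * T ^ 2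
      = ι1 q * T ^ 2 := by
    simp only [q, ι1, Polynomial.aeval_sub, Polynomial.aeval_C, algebraMap_eq, map_mul,
      Polynomial.aeval_X, map_pow]
    ring
  rw [expand, mem_span_pow_succ_mul_pow_iff (X_ne_zero 2), Ideal.mem_span_singleton]
  exact fun h => hq (ι1_eq_zero_of_T_dvd h)

theorem bracket_on_v_mod_t3 (F1 F2 : S) (n1 n2 : Polynomial ℂ) (l1 l2 : ℂ)
    (E1 E2 : Derivation ℂ S S)
    (hE1 : E1 = der F1 (C (1 / 2 : ℂ) * V ^ 2 * T + ι1 n1 * T ^ 2) (C l1 * T ^ 2))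
    (hE2 : E2 = der F2 (C (1 / 2 : ℂ) * T + ι1 n2 * T ^ 2) (C l2 * T ^ 2)) :
    ⁅E1, E2⁆ V -
        (-(C (1 / 2 : ℂ)) * V * T ^ 2 + C (l1 / 2) * T ^ 2 - C (l2 / 2) * V ^ 2 * T ^ 2) ∈
      Ideal.span {T ^ 3} ∧
    -(C (1 / 2 : ℂ)) * V * T ^ 2 + C (l1 / 2) * T ^ 2 - C (l2 / 2) * V ^ 2 * T ^ 2 ∉
      Ideal.span {T ^ 3} := by
  subst hE1 hE2
  exact ⟨bracket_der_apply_V_sub_mem F1 F2 n1 n2 l1 l2,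
    leading_term_not_mem_span_T_pow_three l1 l2⟩

end
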